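/- For every natural number n ≥ 3, there exists a family of directed Hamiltonian cycles in the complete digraph on n vertices whose arc sets together cover all n(n−1) arcs, where the family has n−1 cycles if n is odd and n cycles if n is even; moreover, when n is odd the n−1 directed Hamiltonian cycles can be chosen pairwise arc-disjoint, so that their arc sets partition the arc set of the complete digraph. -/

import Mathlib

/-!
The zigzag ordering `0, 1, -1, 2, -2, …, m` of `ℤ/2m` is a directed terrace: its consecutive
differences `1, -2, 3, -4, …, 2m - 1` run through every nonzero residue exactly once. Hence the
`2m` translates by `g ∈ ℤ/2m` of the closed zigzag cycle cover every arc `(u, v)` of the complete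
digraph on `ℤ/2m`: it lies on the translate that places `u` where the zigzag takes the step
`v - u`. For `2m + 1` vertices, add a point `∞` and take the `2m` cycles
`∞ → b₀ + g → b₁ + g → ⋯ → b₂ₘ₋₁ + g → ∞`. These again cover every arc, and since each vertex has
exactly `2m` out-arcs, counting shows that they are pairwise arc-disjoint.
-/

/-- A directed Hamiltonian cycle on the vertex set `Fin n`, encoded as a cyclic permutation
`σ` with full support: its arc set is `{(u, σ u) | u : Fin n}`, which consists of exactly
`n` arcs and visits every vertex exactly once. -/
def IsDirHamCycle {n : ℕ} (σ : Equiv.Perm (Fin n)) : Prop :=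
  σ.IsCycle ∧ σ.support = Finset.univ

open Equiv Finset

section Arcs

variable {ι V : Type*}

def CoversArcs (σ : ι → Perm V) : Prop :=
  ∀ u v, u ≠ v → ∃ i, σ i u = v

theorem CoversArcs.injective_apply [Fintype ι] [Fintype V] {σ : ι → Perm V} (h : CoversArcs σ)
    (hcard : Fintype.card ι + 1 = Fintype.card V) (u : V) : Function.Injective fun i => σ i u := by
  classical
  have hsub : univ.erase u ⊆ univ.image fun i => σ i u := fun v hv => by
    obtain ⟨i, hi⟩ := h u v (mem_erase.mp hv).1.symm
    exact mem_image.mpr ⟨i, mem_univ _, hi⟩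
  rw [← Set.injOn_univ, ← coe_univ, ← card_image_iff]
  refine le_antisymm card_image_le ?_
  simpa [card_erase_of_mem, ← hcard] using card_le_card hsub

theorem permCongr_finRotate_castSucc {N : ℕ} (e : Fin (N + 1) ≃ V) (p : Fin N) :
    e.permCongr (finRotate (N + 1)) (e p.castSucc) = e p.succ := by
  simp [Fin.coeSucc_eq_succ]

theorem permCongr_finRotate_last {N : ℕ} (e : Fin (N + 1) ≃ V) :
    e.permCongr (finRotate (N + 1)) (e (Fin.last N)) = e 0 := by
  simp

end Arcs

theorem isDirHamCycle_permCongr_finRotate {n : ℕ} (hn : 2 ≤ n) (e : Perm (Fin n)) :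
    IsDirHamCycle (e.permCongr (finRotate n)) := by
  rw [permCongr_eq_mul]
  refine ⟨(isCycle_finRotate_of_le hn).conj, ?_⟩
  simp [Perm.support_conj, support_finRotate_of_le hn]

theorem exists_isDirHamCycle_coversArcs_of_equiv {ι V : Type*} {n c : ℕ} (hn : 2 ≤ n)
    (φ : V ≃ Fin n) (ψ : Fin c ≃ ι) (E : ι → Fin n ≃ V)
    (h : CoversArcs fun i => (E i).permCongr (finRotate n)) :
    ∃ σ : Fin c → Perm (Fin n), (∀ i, IsDirHamCycle (σ i)) ∧ CoversArcs σ := by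
  refine ⟨fun i => ((E (ψ i)).trans φ).permCongr (finRotate n),
    fun i => isDirHamCycle_permCongr_finRotate hn _, fun u v huv => ?_⟩
  obtain ⟨i, hi⟩ := h (φ.symm u) (φ.symm v) (by simpa using huv)
  exact ⟨ψ.symm i, by simpa [← φ.eq_symm_apply] using hi⟩

section Terrace

variable {G : Type*} [AddGroup G] {k : ℕ}

def IsDirectedTerrace (b : Fin (k + 1) ≃ G) : Prop :=
  Function.Injective fun p : Fin k => b p.succ - b p.castSucc

theorem IsDirectedTerrace.exists_sub_eq {b : Fin (k + 1) ≃ G} (hb : IsDirectedTerrace b)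
    {d : G} (hd : d ≠ 0) : ∃ p : Fin k, b p.succ - b p.castSucc = d := by
  classical
  have := Fintype.ofEquiv _ b
  have hsub : univ.image (fun p : Fin k => b p.succ - b p.castSucc) ⊆ univ.erase 0 := by
    intro x hx
    obtain ⟨p, -, rfl⟩ := mem_image.mp hx
    simpa [sub_eq_zero] using (Fin.castSucc_lt_succ (i := p)).ne'
  have hcard : (univ.erase (0 : G)).card ≤
      (univ.image fun p : Fin k => b p.succ - b p.castSucc).card := by
    simp [card_image_of_injective _ hb, card_erase_of_mem, ← Fintype.card_congr b]
  have := eq_of_subset_of_card_le hsub hcard ▸ mem_erase.mpr ⟨hd, mem_univ d⟩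
  simpa using this

theorem IsDirectedTerrace.coversArcs_translate {b : Fin (k + 1) ≃ G} (hb : IsDirectedTerrace b) :
    CoversArcs fun g : G => (b.trans (Equiv.addRight g)).permCongr (finRotate (k + 1)) := by
  intro u v huv
  obtain ⟨p, hp⟩ := hb.exists_sub_eq (sub_ne_zero.mpr huv.symm)
  refine ⟨-b p.castSucc + u, ?_⟩
  have := permCongr_finRotate_castSucc (b.trans (Equiv.addRight (-b p.castSucc + u))) p
  simp only [Equiv.trans_apply, Equiv.coe_addRight, add_neg_cancel_left] at this
  rw [this, ← add_assoc, ← sub_eq_add_neg, hp, sub_add_cancel]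

theorem IsDirectedTerrace.coversArcs_translate_option {b : Fin (k + 1) ≃ G}
    (hb : IsDirectedTerrace b) :
    CoversArcs fun g : G =>
      ((finSuccEquiv (k + 1)).trans (b.trans (Equiv.addRight g)).optionCongr).permCongr
        (finRotate (k + 2)) := by
  set E : G → Fin (k + 2) ≃ Option G :=
    fun g => (finSuccEquiv (k + 1)).trans (b.trans (Equiv.addRight g)).optionCongr
  have hE0 (g : G) : E g 0 = none := rfl
  have hEsucc (g : G) (q : Fin (k + 1)) : E g q.succ = some (b q + g) := by simp [E]
  have hcyc (g : G) (p : Fin (k + 1)) := permCongr_finRotate_castSucc (E g) p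
  rintro (_ | x) (_ | y) huv
  · exact absurd rfl huv
  · refine ⟨-b 0 + y, ?_⟩
    have := hcyc (-b 0 + y) 0
    rwa [Fin.castSucc_zero, hE0, hEsucc, add_neg_cancel_left] at this
  · refine ⟨-b (Fin.last k) + x, ?_⟩
    have := permCongr_finRotate_last (E (-b (Fin.last k) + x))
    rwa [← Fin.succ_last, hEsucc, add_neg_cancel_left, hE0] at this
  · obtain ⟨p, hp⟩ := hb.exists_sub_eq (sub_ne_zero.mpr fun h => huv (congrArg some h).symm)
    refine ⟨-b p.castSucc + x, ?_⟩
    have := hcyc (-b p.castSucc + x) p.succ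
    rw [← Fin.succ_castSucc, hEsucc, hEsucc, add_neg_cancel_left] at this
    rw [this, ← add_assoc, ← sub_eq_add_neg, hp, sub_add_cancel]

end Terrace

def zigzag (p : ℕ) : ℤ :=
  if p % 2 = 0 then -((p : ℤ) / 2) else (p : ℤ) / 2 + 1

theorem zigzag_injective : Function.Injective zigzag := by
  intro p q h
  unfold zigzag at h
  split_ifs at h <;> omega

theorem zigzag_succ_sub (p : ℕ) :
    zigzag (p + 1) - zigzag p = if p % 2 = 0 then (p : ℤ) + 1 else -((p : ℤ) + 1) := by
  unfold zigzag
  split_ifs <;> omega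

theorem ZMod.eq_of_intCast_eq_of_abs_sub_lt {N : ℕ} {x y : ℤ} (hxy : (x : ZMod N) = y)
    (h : |x - y| < N) : x = y := by
  rw [ZMod.intCast_eq_intCast_iff_dvd_sub] at hxy
  have := Int.eq_zero_of_abs_lt_dvd hxy (by rwa [abs_sub_comm])
  omega

theorem ZMod.exists_isDirectedTerrace {k : ℕ} (hk : Even (k + 1)) :
    ∃ b : Fin (k + 1) ≃ ZMod (k + 1), IsDirectedTerrace b := by
  obtain ⟨m, hm⟩ := hk
  have hinj : Function.Injective fun p : Fin (k + 1) => (zigzag p : ZMod (k + 1)) := by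
    intro p q h
    refine Fin.ext (zigzag_injective (ZMod.eq_of_intCast_eq_of_abs_sub_lt h ?_))
    have := p.isLt; have := q.isLt
    rw [abs_lt]; unfold zigzag; split_ifs <;> omega
  refine ⟨.ofBijective _ ((Fintype.bijective_iff_injective_and_card _).mpr ⟨hinj, by simp⟩), ?_⟩
  intro p q h
  simp only [Equiv.ofBijective_apply, Fin.val_succ, Fin.val_castSucc, ← Int.cast_sub,
    zigzag_succ_sub] at h
  rw [ZMod.intCast_eq_intCast_iff_dvd_sub] at h
  push_cast at h
  have htwo : (2 : ℤ) ∣ k + 1 := ⟨m, by omega⟩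
  have := p.isLt; have := q.isLt
  apply Fin.ext
  -- Steps taken from indices of equal parity differ by `±(p - q)`, too little to be divisible
  -- by `k + 1`; those from indices of opposite parity differ by the odd number `±(p + q + 2)`.
  split_ifs at h
  · have := Int.eq_zero_of_abs_lt_dvd h (by rw [abs_lt]; omega); omega
  · have := htwo.trans h; omega
  · have := htwo.trans h; omega
  · have := Int.eq_zero_of_abs_lt_dvd h (by rw [abs_lt]; omega); omega

theorem exists_isDirHamCycle_coversArcs_of_even {k : ℕ} (hk : Even (k + 1)) :
    ∃ σ : Fin (k + 1) → Perm (Fin (k + 1)), (∀ i, IsDirHamCycle (σ i)) ∧ CoversArcs σ := by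
  obtain ⟨b, hb⟩ := ZMod.exists_isDirectedTerrace hk
  have hk1 : 1 ≤ k := by rcases hk with ⟨m, hm⟩; omega
  exact exists_isDirHamCycle_coversArcs_of_equiv (by omega) (ZMod.finEquiv (k + 1)).symm.toEquiv
    (ZMod.finEquiv (k + 1)).toEquiv _ hb.coversArcs_translate

theorem exists_isDirHamCycle_coversArcs_of_odd {k : ℕ} (hk : Even (k + 1)) :
    ∃ σ : Fin (k + 1) → Perm (Fin (k + 2)), (∀ i, IsDirHamCycle (σ i)) ∧ CoversArcs σ := by
  obtain ⟨b, hb⟩ := ZMod.exists_isDirectedTerrace hk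
  exact exists_isDirHamCycle_coversArcs_of_equiv (by omega)
    ((ZMod.finEquiv (k + 1)).symm.toEquiv.optionCongr.trans (finSuccEquiv (k + 1)).symm)
    (ZMod.finEquiv (k + 1)).toEquiv _ hb.coversArcs_translate_option

/-- For every `n ≥ 3`, there is a family of directed Hamiltonian cycles in the complete
digraph on `n` vertices whose arc sets together cover all `n(n-1)` arcs (an arc `(u,v)` with
`u ≠ v` is covered by the cycle `σ i` iff `σ i u = v`), where the family has `n-1` cycles if
`n` is odd and `n` cycles if `n` is even; moreover, when `n` is odd the `n-1` cycles can be
chosen pairwise arc-disjoint, so that their arc sets partition the arcs of the complete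
digraph. -/
theorem complete_digraph_hamiltonian_cover (n : ℕ) (hn : 3 ≤ n) :
    ∃ (c : ℕ) (σ : Fin c → Equiv.Perm (Fin n)),
      (∀ i, IsDirHamCycle (σ i)) ∧
      (∀ u v : Fin n, u ≠ v → ∃ i, (σ i) u = v) ∧
      (Odd n → c = n - 1) ∧
      (Even n → c = n) ∧
      (Odd n → ∀ i j, i ≠ j → ∀ u : Fin n, (σ i) u ≠ (σ j) u) := by
  rcases Nat.even_or_odd n with hn_even | hn_odd
  · obtain ⟨k, rfl⟩ : ∃ k, n = k + 1 := ⟨n - 1, by omega⟩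
    obtain ⟨σ, hham, hcov⟩ := exists_isDirHamCycle_coversArcs_of_even hn_even
    exact ⟨k + 1, σ, hham, hcov, fun h => absurd hn_even (Nat.not_even_iff_odd.mpr h),
      fun _ => rfl, fun h => absurd hn_even (Nat.not_even_iff_odd.mpr h)⟩
  · obtain ⟨k, rfl⟩ : ∃ k, n = k + 2 := ⟨n - 2, by omega⟩
    obtain ⟨σ, hham, hcov⟩ := exists_isDirHamCycle_coversArcs_of_odd (k := k)
      (by simpa [Nat.even_add_one, parity_simps] using hn_odd)
    exact ⟨k + 1, σ, hham, hcov, fun _ => rfl, fun h => absurd h (Nat.not_even_iff_odd.mpr hn_odd),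
      fun _ i j hij u => (hcov.injective_apply (by simp) u).ne hij⟩
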